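/- Let A be a real M×N matrix such that AA* is invertible, and let γ_t(A) denote its preconditioned restricted isometry constant of order t. Let u, v ∈ ℝ^N be vectors with supp(u) = T′ and supp(v) = T″. If |T′ ∪ T″| ≤ t, then |⟨u, (I − A*(AA*)⁻¹A)v⟩| ≤ γ_t(A) · ‖u‖₂ · ‖v‖₂. -/

import Mathlib

open Matrix

/-- The Euclidean (ℓ²) norm of a vector in ℝⁿ. -/
noncomputable def norm2 {n : ℕ} (x : Fin n → ℝ) : ℝ := Real.sqrt (∑ i, x i ^ 2)

/-- `x` is `s`-sparse: it has at most `s` nonzero entries. -/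
def sparse {n : ℕ} (s : ℕ) (x : Fin n → ℝ) : Prop :=
  (Finset.univ.filter fun i => x i ≠ 0).card ≤ s

/-- The positive semidefinite square root of a positive semidefinite matrix
(the definition of `Matrix.PosSemidef.sqrt` in the older Mathlib). -/
noncomputable def posSemidefSqrt {n : Type*} [Fintype n] [DecidableEq n] {A : Matrix n n ℝ}
    (hA : A.PosSemidef) : Matrix n n ℝ :=
  (hA.1.eigenvectorUnitary : Matrix n n ℝ) * diagonal ((↑) ∘ (√·) ∘ hA.1.eigenvalues) *
    (star hA.1.eigenvectorUnitary : Matrix n n ℝ)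

/-- The preconditioned matrix `(AAᴴ)^{-1/2} A`, where `(AAᴴ)^{-1/2}` is the inverse of the
positive semidefinite square root of `AAᴴ`. -/
noncomputable def precond {M N : ℕ} (A : Matrix (Fin M) (Fin N) ℝ) :
    Matrix (Fin M) (Fin N) ℝ :=
  (posSemidefSqrt (Matrix.posSemidef_self_mul_conjTranspose A))⁻¹ * A

/-- The preconditioned restricted isometry constant `γ_s(A)`: the smallest `γ ≥ 0` such that
`(1-γ)‖x‖₂² ≤ ‖(AAᴴ)^{-1/2}Ax‖₂²` for all `s`-sparse `x`. -/
noncomputable def pripConst {M N : ℕ} (A : Matrix (Fin M) (Fin N) ℝ) (s : ℕ) : ℝ :=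
  sInf {γ : ℝ | 0 ≤ γ ∧ ∀ x : Fin N → ℝ, sparse s x →
    (1 - γ) * norm2 x ^ 2 ≤ norm2 ((precond A).mulVec x) ^ 2}

/-!
Write `B = (AAᴴ)^{-1/2} A`. Then `BBᴴ = 1` and `Aᴴ(AAᴴ)⁻¹A = BᴴB`, so `Q = 1 - BᴴB` is an
orthogonal projection. Hence `⟪u, Qv⟫ = ⟪Qu, Qv⟫`, and by Cauchy–Schwarz it suffices to bound
`‖Qx‖² = ‖x‖² - ‖Bx‖² ≤ γ_t ‖x‖²` for `x = u, v`, which the definition of `γ_t` gives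
because `u` and `v` are `t`-sparse.
-/

lemma norm2_eq_norm_toLp {n : ℕ} (x : Fin n → ℝ) :
    norm2 x = ‖(WithLp.toLp 2 x : EuclideanSpace ℝ (Fin n))‖ := by
  simp [norm2, EuclideanSpace.norm_eq]

lemma norm2_nonneg {n : ℕ} (x : Fin n → ℝ) : 0 ≤ norm2 x := Real.sqrt_nonneg _

lemma norm2_sq {n : ℕ} (x : Fin n → ℝ) : norm2 x ^ 2 = x ⬝ᵥ x := by
  rw [norm2_eq_norm_toLp, ← real_inner_self_eq_norm_sq, EuclideanSpace.inner_toLp_toLp,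
    star_trivial]

lemma abs_dotProduct_le_norm2_mul_norm2 {n : ℕ} (x y : Fin n → ℝ) :
    |x ⬝ᵥ y| ≤ norm2 x * norm2 y := by
  rw [norm2_eq_norm_toLp, norm2_eq_norm_toLp, dotProduct_comm, ← star_trivial x,
    ← EuclideanSpace.inner_toLp_toLp]
  exact abs_real_inner_le_norm _ _

lemma sparse_of_ne_zero_imp_mem {n s : ℕ} {x : Fin n → ℝ} {T : Finset (Fin n)}
    (hx : ∀ i, x i ≠ 0 → i ∈ T) (hT : T.card ≤ s) : sparse s x :=
  (Finset.card_le_card fun i hi => hx i (Finset.mem_filter.mp hi).2).trans hT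

section pripConst

variable {M N : ℕ} (A : Matrix (Fin M) (Fin N) ℝ) (s : ℕ)

lemma pripConst_set_nonempty : {γ : ℝ | 0 ≤ γ ∧ ∀ x : Fin N → ℝ, sparse s x →
    (1 - γ) * norm2 x ^ 2 ≤ norm2 ((precond A).mulVec x) ^ 2}.Nonempty :=
  ⟨1, zero_le_one, fun x _ => by rw [sub_self, zero_mul]; positivity⟩

lemma pripConst_nonneg : 0 ≤ pripConst A s :=
  le_csInf (pripConst_set_nonempty A s) fun _ hγ => hγ.1

variable {A s}

lemma one_sub_pripConst_mul_norm2_sq_le {x : Fin N → ℝ} (hx : sparse s x) :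
    (1 - pripConst A s) * norm2 x ^ 2 ≤ norm2 (precond A *ᵥ x) ^ 2 := by
  rcases (sq_nonneg (norm2 x)).eq_or_lt with h | h
  · rw [← h, mul_zero]
    positivity
  · have : (norm2 x ^ 2 - norm2 (precond A *ᵥ x) ^ 2) / norm2 x ^ 2 ≤ pripConst A s :=
      le_csInf (pripConst_set_nonempty A s) fun γ hγ => by
        rw [div_le_iff₀ h]
        linarith [hγ.2 x hx]
    rw [div_le_iff₀ h] at this
    linarith

end pripConst

section posSemidefSqrt

variable {n : Type*} [Fintype n] [DecidableEq n] {A : Matrix n n ℝ} (hA : A.PosSemidef)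

lemma posSemidefSqrt_mul_self : posSemidefSqrt hA * posSemidefSqrt hA = A := by
  set U : Matrix n n ℝ := ↑hA.1.eigenvectorUnitary
  set D : Matrix n n ℝ := diagonal ((↑) ∘ (√·) ∘ hA.1.eigenvalues)
  have hU : star U * U = 1 := Unitary.coe_star_mul_self _
  have hD : D * D = diagonal (RCLike.ofReal ∘ hA.1.eigenvalues) := by
    rw [diagonal_mul_diagonal]
    congr 1
    funext i
    simp [Real.mul_self_sqrt (hA.eigenvalues_nonneg i)]
  calc U * D * star U * (U * D * star U) = U * D * (star U * U) * D * star U := by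
        simp only [Matrix.mul_assoc]
    _ = U * (D * D) * star U := by
        rw [hU, Matrix.mul_one]
        simp only [Matrix.mul_assoc]
    _ = A := by
        rw [hD]
        simpa only [Unitary.conjStarAlgAut_apply] using hA.1.spectral_theorem.symm

lemma posSemidefSqrt_conjTranspose : (posSemidefSqrt hA)ᴴ = posSemidefSqrt hA := by
  rw [posSemidefSqrt, ← star_eq_conjTranspose, star_mul, star_mul, star_star,
    star_eq_conjTranspose (diagonal _), diagonal_conjTranspose, star_trivial, Matrix.mul_assoc]

end posSemidefSqrt

section TrivialStar

variable {m n R : Type*} [Fintype n] [Ring R] [StarRing R] [TrivialStar R]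

lemma vecMul_conjTranspose_of_trivialStar (B : Matrix m n R) (x : n → R) :
    x ᵥ* Bᴴ = B *ᵥ x := by
  rw [vecMul_conjTranspose, star_trivial, star_trivial]

lemma dotProduct_mulVec_eq_of_isStarProjection {Q : Matrix n n R} (hQ : IsStarProjection Q)
    (x y : n → R) : x ⬝ᵥ Q *ᵥ y = Q *ᵥ x ⬝ᵥ Q *ᵥ y := by
  have hQx : x ᵥ* Q = Q *ᵥ x := by
    rw [← vecMul_conjTranspose_of_trivialStar, ← star_eq_conjTranspose, hQ.isSelfAdjoint.star_eq]
  conv_lhs => rw [← hQ.isIdempotentElem.eq]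
  rw [← mulVec_mulVec, dotProduct_mulVec, hQx]

lemma dotProduct_one_sub_conjTranspose_mul_self_mulVec [Fintype m] [DecidableEq n]
    (B : Matrix m n R) (x : n → R) :
    x ⬝ᵥ (1 - Bᴴ * B) *ᵥ x = x ⬝ᵥ x - B *ᵥ x ⬝ᵥ B *ᵥ x := by
  rw [sub_mulVec, one_mulVec, dotProduct_sub, ← mulVec_mulVec, dotProduct_mulVec,
    vecMul_conjTranspose_of_trivialStar]

end TrivialStar

lemma isStarProjection_conjTranspose_mul_self {m n α : Type*} [Fintype m] [DecidableEq m]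
    [Fintype n] [Semiring α] [StarRing α] {B : Matrix m n α} (hB : B * Bᴴ = 1) :
    IsStarProjection (Bᴴ * B) where
  isIdempotentElem := by
    rw [IsIdempotentElem, Matrix.mul_assoc, ← Matrix.mul_assoc B, hB, Matrix.one_mul]
  isSelfAdjoint := by
    rw [IsSelfAdjoint, star_eq_conjTranspose, conjTranspose_mul, conjTranspose_conjTranspose]

section precond

variable {M N : ℕ} {A : Matrix (Fin M) (Fin N) ℝ}

lemma precond_mul_conjTranspose (hA : IsUnit (A * Aᴴ).det) : precond A * (precond A)ᴴ = 1 := by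
  set S := posSemidefSqrt (posSemidef_self_mul_conjTranspose A)
  have hSS : S * S = A * Aᴴ := posSemidefSqrt_mul_self _
  have hSH : Sᴴ = S := posSemidefSqrt_conjTranspose _
  have hS : IsUnit S.det := isUnit_of_mul_isUnit_left (by rwa [← det_mul, hSS])
  have hB : precond A = S⁻¹ * A := rfl
  calc precond A * (precond A)ᴴ = S⁻¹ * (A * Aᴴ) * S⁻¹ := by
        rw [hB, conjTranspose_mul, conjTranspose_nonsing_inv, hSH]
        simp only [Matrix.mul_assoc]
    _ = 1 := by
        rw [← hSS, ← Matrix.mul_assoc, nonsing_inv_mul _ hS, Matrix.one_mul,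
          mul_nonsing_inv _ hS]

lemma conjTranspose_mul_inv_mul_eq_conjTranspose_precond_mul (A : Matrix (Fin M) (Fin N) ℝ) :
    Aᴴ * (A * Aᴴ)⁻¹ * A = (precond A)ᴴ * precond A := by
  set S := posSemidefSqrt (posSemidef_self_mul_conjTranspose A)
  have hinv : (A * Aᴴ)⁻¹ = S⁻¹ * S⁻¹ := by rw [← Matrix.mul_inv_rev, posSemidefSqrt_mul_self]
  have hB : precond A = S⁻¹ * A := rfl
  have hSH : Sᴴ = S := posSemidefSqrt_conjTranspose _
  rw [hinv, hB, conjTranspose_mul, conjTranspose_nonsing_inv, hSH]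
  simp only [Matrix.mul_assoc]

lemma isStarProjection_one_sub_conjTranspose_precond_mul (hA : IsUnit (A * Aᴴ).det) :
    IsStarProjection (1 - (precond A)ᴴ * precond A) :=
  (isStarProjection_conjTranspose_mul_self (precond_mul_conjTranspose hA)).one_sub

lemma norm2_one_sub_precond_mulVec_le (hA : IsUnit (A * Aᴴ).det) {s : ℕ} {x : Fin N → ℝ}
    (hx : sparse s x) :
    norm2 ((1 - (precond A)ᴴ * precond A) *ᵥ x) ≤ √(pripConst A s) * norm2 x := by
  have hQ := isStarProjection_one_sub_conjTranspose_precond_mul hA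
  refine (pow_le_pow_iff_left₀ (norm2_nonneg _)
    (mul_nonneg (Real.sqrt_nonneg _) (norm2_nonneg x)) two_ne_zero).mp ?_
  rw [mul_pow, Real.sq_sqrt (pripConst_nonneg A s), norm2_sq,
    ← dotProduct_mulVec_eq_of_isStarProjection hQ,
    dotProduct_one_sub_conjTranspose_mul_self_mulVec, ← norm2_sq, ← norm2_sq]
  linarith [one_sub_pripConst_mul_norm2_sq_le (A := A) hx]

end precond

theorem stmt0 {M N : ℕ} (A : Matrix (Fin M) (Fin N) ℝ) (hA : IsUnit (A * Aᴴ).det)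
    (t : ℕ) (u v : Fin N → ℝ) (T' T'' : Finset (Fin N))
    (hu : ∀ i, u i ≠ 0 ↔ i ∈ T') (hv : ∀ i, v i ≠ 0 ↔ i ∈ T'')
    (hT : (T' ∪ T'').card ≤ t) :
    |u ⬝ᵥ (1 - Aᴴ * (A * Aᴴ)⁻¹ * A).mulVec v| ≤ pripConst A t * norm2 u * norm2 v := by
  set Q : Matrix (Fin N) (Fin N) ℝ := 1 - (precond A)ᴴ * precond A
  have hQ : IsStarProjection Q := isStarProjection_one_sub_conjTranspose_precond_mul hA
  have hu' : sparse t u :=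
    sparse_of_ne_zero_imp_mem (fun i hi => Finset.mem_union_left _ ((hu i).mp hi)) hT
  have hv' : sparse t v :=
    sparse_of_ne_zero_imp_mem (fun i hi => Finset.mem_union_right _ ((hv i).mp hi)) hT
  rw [conjTranspose_mul_inv_mul_eq_conjTranspose_precond_mul,
    dotProduct_mulVec_eq_of_isStarProjection hQ]
  calc |Q *ᵥ u ⬝ᵥ Q *ᵥ v| ≤ norm2 (Q *ᵥ u) * norm2 (Q *ᵥ v) :=
        abs_dotProduct_le_norm2_mul_norm2 _ _
    _ ≤ (√(pripConst A t) * norm2 u) * (√(pripConst A t) * norm2 v) :=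
        mul_le_mul (norm2_one_sub_precond_mulVec_le hA hu')
          (norm2_one_sub_precond_mulVec_le hA hv') (norm2_nonneg _)
          (mul_nonneg (Real.sqrt_nonneg _) (norm2_nonneg u))
    _ = pripConst A t * norm2 u * norm2 v := by
        rw [mul_mul_mul_comm, Real.mul_self_sqrt (pripConst_nonneg A t), mul_assoc]
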